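/- Let γ < ω₁, let {f_τ : τ ∈ I} be a countable indexed family of automorphisms of T↾(γ+1), and let A ⊆ B ⊆ I be finite. Let Y, Z ⊆ T_{γ+1} be finite sets, each with unique drop-downs to γ, such that Y ∩ Z = ∅. Then there exists an indexed family {g_τ : τ ∈ I} of automorphisms of T↾(γ+2) such that: (1) f_τ ⊆ g_τ for all τ ∈ I; (2) for all τ ∈ B, Y↾γ and Y are g_τ-consistent; (3) for all τ ∈ A, Z↾γ and Z are g_τ-consistent; and (4) for all τ ∈ B \ A and all x ∈ Z, g_τ(x) ∉ Y ∪ Z and g_τ^{-1}(x) ∉ Y ∪ Z. -/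

import Mathlib

/-!
An automorphism of `T↾(γ+1)` extends to `T↾(γ+2)` by choosing, for every node `u` of level `γ`,
a bijection between the immediate successors of `u` and those of `f(u)`. Both sets are countably
infinite, so any finite partial matching between them extends to a bijection which in addition
sends finitely many prescribed points outside a given finite set. On each fiber we match the
(at most one) point of `Y` over `u` with the one over `f(u)`, for `τ ∈ A` likewise for `Z`, and
send all unmatched points of `Y ∪ Z` outside `Y ∪ Z`. For `τ ∉ A` the points of `Z` stay
unmatched, so `g_τ` and `g_τ⁻¹` move `Z` off `Y ∪ Z`.
-/

noncomputable section

/-- The ordinal `ω₁`. -/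
def omega1 : Ordinal := (Cardinal.aleph 1).ord

/-- A normal, infinitely splitting `ω₁`-tree structure on the partial order `α`.
`height x` is the height of `x` (the order type of its set of strict predecessors,
which is linearly ordered by `pred_linear`), and `restrict x β` is the unique node
of height `β` below `x` (for `β ≤ height x`). -/
structure OmegaOneTree (α : Type) [PartialOrder α] where
  height : α → Ordinal
  restrict : α → Ordinal → α
  height_lt_omega1 : ∀ x : α, height x < omega1
  height_strictMono : ∀ {x y : α}, x < y → height x < height y
  pred_linear : ∀ {x y z : α}, y < x → z < x → y ≤ z ∨ z ≤ y
  restrict_le : ∀ (x : α) {β : Ordinal}, β ≤ height x → restrict x β ≤ x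
  height_restrict : ∀ (x : α) {β : Ordinal}, β ≤ height x → height (restrict x β) = β
  restrict_eq : ∀ {x y : α} {β : Ordinal}, y ≤ x → height y = β → restrict x β = y
  level_nonempty : ∀ β : Ordinal, β < omega1 → ∃ x : α, height x = β
  level_countable : ∀ β : Ordinal, {x : α | height x = β}.Countable
  root_exists : ∃ r : α, height r = 0 ∧ ∀ x : α, r ≤ x
  splitting : ∀ x : α, {y : α | x < y ∧ height y = height x + 1}.Infinite
  exists_above : ∀ (x : α) {β : Ordinal}, height x < β → β < omega1 →
    ∃ y : α, x < y ∧ height y = β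
  limit_eq : ∀ {x y : α}, height x = height y → Order.IsSuccLimit (height x) →
    (∀ z : α, z < x ↔ z < y) → x = y

variable {α : Type} [PartialOrder α]

/-- The pair `(g, g')` is an automorphism of `T↾(β+1)` together with its inverse:
both are level preserving on `T↾(β+1)`, mutually inverse there, and strictly
increasing there (hence `g` is an order isomorphism of `T↾(β+1)` onto itself). -/
def IsTreeAuto (T : OmegaOneTree α) (β : Ordinal) (g g' : α → α) : Prop :=
  (∀ x : α, T.height x ≤ β → T.height (g x) = T.height x) ∧
  (∀ x : α, T.height x ≤ β → T.height (g' x) = T.height x) ∧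
  (∀ x : α, T.height x ≤ β → g' (g x) = x) ∧
  (∀ x : α, T.height x ≤ β → g (g' x) = x) ∧
  (∀ x y : α, T.height y ≤ β → x < y → g x < g y) ∧
  (∀ x y : α, T.height y ≤ β → x < y → g' x < g' y)

/-- `(g, g')` extends `(f, f')` on `T↾(γ+1)` (i.e. `f ⊆ g` for automorphisms). -/
def AutoExtends (T : OmegaOneTree α) (γ : Ordinal) (f f' g g' : α → α) : Prop :=
  (∀ x : α, T.height x ≤ γ → g x = f x) ∧ (∀ x : α, T.height x ≤ γ → g' x = f' x)

/-- `X↾lo` and `X` are `g`-consistent: for all `x, y ∈ X`,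
`g(x↾lo) = y↾lo` iff `g(x) = y`. -/
def AutoConsistentSet (T : OmegaOneTree α) (g : α → α) (lo : Ordinal) (X : Set α) : Prop :=
  ∀ x ∈ X, ∀ y ∈ X, (g (T.restrict x lo) = T.restrict y lo ↔ g x = y)

/-- The tuples `a` and `b` (with `a = b↾lo` componentwise) are `g`-consistent:
for all `i, j`, `g(a i) = a j` iff `g(b i) = b j`. -/
def AutoConsistentPair (g : α → α) {n : ℕ} (a b : Fin n → α) : Prop :=
  ∀ i j : Fin n, (g (a i) = a j ↔ g (b i) = b j)

/-- The indexed family of automorphisms `(g, g')` is separated on the injective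
tuple `a`: no member of the tuple satisfies a relation with itself, and each
member satisfies at most one relation `g_τ^m(a k) = a i` with earlier members. -/
def AutoSepTuple {ι : Type} (g g' : ι → α → α) {n : ℕ} (a : Fin n → α) : Prop :=
  (∀ (k : Fin n) (τ : ι), g τ (a k) ≠ a k) ∧
  ∀ (k i₁ i₂ : Fin n) (m₁ m₂ : Bool) (τ₁ τ₂ : ι), i₁ < k → i₂ < k →
    cond m₁ (g τ₁ (a k)) (g' τ₁ (a k)) = a i₁ →
    cond m₂ (g τ₂ (a k)) (g' τ₂ (a k)) = a i₂ →
    i₁ = i₂ ∧ m₁ = m₂ ∧ τ₁ = τ₂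

/-- The indexed family of automorphisms `(g, g')` is separated on the finite set
`X`: some injective tuple listing the elements of `X` witnesses separation. -/
def AutoSepSet {ι : Type} (g g' : ι → α → α) (X : Set α) : Prop :=
  ∃ (n : ℕ) (a : Fin n → α), Function.Injective a ∧ Set.range a = X ∧ AutoSepTuple g g' a

/-- The indexed family of automorphisms `(g, g')` of `T↾(β+1)` is separated:
it is separated on every finite subset of the level `T_β`. -/
def AutoSeparated (T : OmegaOneTree α) (β : Ordinal) {ι : Type} (g g' : ι → α → α) : Prop :=
  ∀ X : Set α, X.Finite → (∀ x ∈ X, T.height x = β) → AutoSepSet g g' X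

namespace Set

variable {β δ : Type*} {F S : Set β} {G : Set δ} {t : β → δ}

theorem Countable.exists_bijOn_of_infinite (hF : F.Countable) (hFi : F.Infinite)
    (hG : G.Countable) (hGi : G.Infinite) : ∃ φ : β → δ, BijOn φ F G := by
  classical
  have := hF.to_subtype
  have := hFi.to_subtype
  have := hG.to_subtype
  have := hGi.to_subtype
  obtain ⟨e⟩ : Nonempty (F ≃ G) := nonempty_equiv_of_countable
  obtain ⟨b⟩ : Nonempty δ := hGi.nonempty.to_type
  refine ⟨fun x => if h : x ∈ F then e ⟨x, h⟩ else b, fun x hx => by simp [hx], ?_, ?_⟩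
  · intro x hx y hy hxy
    simp only [hx, hy, dif_pos] at hxy
    exact congrArg Subtype.val (e.injective (Subtype.ext hxy))
  · intro y hy
    exact ⟨e.symm ⟨y, hy⟩, (e.symm _).2, by simp⟩

theorem Countable.exists_bijOn_extend (hF : F.Countable) (hFi : F.Infinite)
    (hG : G.Countable) (hGi : G.Infinite) (hS : S.Finite) (hSF : S ⊆ F)
    (ht : InjOn t S) (htG : MapsTo t S G) : ∃ φ : β → δ, BijOn φ F G ∧ EqOn φ t S := by
  classical
  obtain ⟨ψ, hψ⟩ := (hF.mono sdiff_subset).exists_bijOn_of_infinite (hFi.sdiff hS)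
    (hG.mono sdiff_subset) (hGi.sdiff (hS.image t))
  have hS' : BijOn (S.piecewise t ψ) S (t '' S) := ht.bijOn_image.congr (piecewise_eqOn ..).symm
  have hFS : BijOn (S.piecewise t ψ) (F \ S) (G \ t '' S) :=
    hψ.congr fun x hx => (piecewise_eqOn_compl S t ψ hx.2).symm
  refine ⟨S.piecewise t ψ, ?_, piecewise_eqOn ..⟩
  rw [← union_sdiff_cancel hSF, ← union_sdiff_cancel (image_subset_iff.2 htG)]
  refine hS'.union hFS ((injOn_union disjoint_sdiff_right).2 ⟨hS'.injOn, hFS.injOn, ?_⟩)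
  intro x hx y hy hxy
  exact (hFS.mapsTo hy).2 (hxy ▸ hS'.mapsTo hx)

theorem Countable.exists_bijOn_extend_avoiding (hF : F.Countable) (hFi : F.Infinite)
    (hG : G.Countable) (hGi : G.Infinite) (hS : S.Finite) (hSF : S ⊆ F)
    (ht : InjOn t S) (htG : MapsTo t S G) {R : Set β} {K : Set δ} (hR : R.Finite) (hRF : R ⊆ F)
    (hK : K.Finite) : ∃ φ : β → δ, BijOn φ F G ∧ EqOn φ t S ∧ MapsTo φ (R \ S) Kᶜ := by
  classical
  have : Nonempty δ := hGi.nonempty.to_type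
  obtain ⟨s, hsG, hs⟩ := (hR.sdiff (t := S)).exists_injOn_of_encard_le
    (t := G \ (K ∪ t '' S)) (by rw [(hGi.sdiff (hK.union (hS.image t))).encard_eq]; exact le_top)
  have htS : EqOn (S.piecewise t s) t S := piecewise_eqOn ..
  have hsR : EqOn (S.piecewise t s) s (R \ S) := fun x hx => piecewise_eqOn_compl S t s hx.2
  have hinj : InjOn (S.piecewise t s) (S ∪ R \ S) := by
    refine (injOn_union disjoint_sdiff_right).2
      ⟨ht.congr htS.symm, hs.congr hsR.symm, fun x hx y hy hxy => (hsG hy).2 (Or.inr ?_)⟩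
    rw [← hsR hy, ← hxy, htS hx]
    exact mem_image_of_mem t hx
  have hmaps : MapsTo (S.piecewise t s) (S ∪ R \ S) G := by
    rintro x (hx | hx)
    · rw [htS hx]; exact htG hx
    · rw [hsR hx]; exact (hsG hx).1
  obtain ⟨φ, hφ, hφt⟩ := hF.exists_bijOn_extend hFi hG hGi (hS.union (hR.sdiff (t := S)))
    (union_subset hSF (sdiff_subset.trans hRF)) hinj hmaps
  refine ⟨φ, hφ, fun x hx => (hφt (Or.inl hx)).trans (htS hx), fun x hx hxK => ?_⟩
  rw [hφt (Or.inr hx), hsR hx] at hxK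
  exact (hsG hx).2 (Or.inl hxK)

theorem Countable.exists_bijOn_of_pairs (hF : F.Countable) (hFi : F.Infinite)
    (hG : G.Countable) (hGi : G.Infinite) {P : Set (β × δ)} (hP : P.Finite)
    (hPFG : P ⊆ F ×ˢ G) (hfst : InjOn Prod.fst P) (hsnd : InjOn Prod.snd P)
    {R : Set β} {K : Set δ} (hR : R.Finite) (hRF : R ⊆ F) (hK : K.Finite) :
    ∃ φ : β → δ, BijOn φ F G ∧ (∀ q ∈ P, φ q.1 = q.2) ∧ MapsTo φ (R \ Prod.fst '' P) Kᶜ := by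
  have : Nonempty (β × δ) := ⟨(hFi.nonempty.some, hGi.nonempty.some)⟩
  set t : β → δ := fun x => (Function.invFunOn Prod.fst P x).2
  have ht : ∀ q ∈ P, t q.1 = q.2 := fun q hq => by
    have hq' := Function.invFunOn_pos (f := Prod.fst) ⟨q, hq, rfl⟩
    exact congrArg Prod.snd (hfst hq'.1 hq hq'.2)
  have hinj : InjOn t (Prod.fst '' P) := by
    rintro _ ⟨q, hq, rfl⟩ _ ⟨q', hq', rfl⟩ h
    rw [ht q hq, ht q' hq', hsnd.eq_iff hq hq'] at h
    rw [h]
  have hmaps : MapsTo t (Prod.fst '' P) G := by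
    rintro _ ⟨q, hq, rfl⟩
    rw [ht q hq]
    exact (hPFG hq).2
  obtain ⟨φ, hφ, hφt, hφK⟩ := hF.exists_bijOn_extend_avoiding hFi hG hGi (hP.image _)
    (image_subset_iff.2 fun q hq => (hPFG hq).1) hinj hmaps hR hRF hK
  exact ⟨φ, hφ, fun q hq => (hφt (mem_image_of_mem _ hq)).trans (ht q hq), hφK⟩

end Set

theorem Set.Countable.exists_bijOn_matching {β : Type*} {F G : Set β} (hF : F.Countable)
    (hFi : F.Infinite) (hG : G.Countable) (hGi : G.Infinite) {Y Z : Set β} (hY : Y.Finite)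
    (hZ : Z.Finite) (hYZ : Disjoint Y Z) (hYF : (Y ∩ F).Subsingleton)
    (hYG : (Y ∩ G).Subsingleton) (hZF : (Z ∩ F).Subsingleton) (hZG : (Z ∩ G).Subsingleton)
    (p : Prop) :
    ∃ φ : β → β, Set.BijOn φ F G ∧ (∀ x ∈ Y ∩ F, ∀ y ∈ Y ∩ G, φ x = y) ∧
      (p → ∀ x ∈ Z ∩ F, ∀ z ∈ Z ∩ G, φ x = z) ∧
      (¬p → Set.MapsTo φ (Z ∩ F) (Y ∪ Z)ᶜ) ∧ (¬p → Set.MapsTo φ ((Y ∪ Z) ∩ F) Zᶜ) := by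
  set P := (Y ∩ F) ×ˢ (Y ∩ G) ∪ {x ∈ Z ∩ F | p} ×ˢ (Z ∩ G)
  have hPY : ¬p → ∀ q ∈ P, q.1 ∈ Y ∧ q.2 ∈ Y := by
    rintro hp q (⟨hq₁, hq₂⟩ | ⟨⟨-, hq⟩, -⟩)
    exacts [⟨hq₁.1, hq₂.1⟩, (hp hq).elim]
  have hPP : ∀ q ∈ P, ∀ q' ∈ P, (q.1 = q'.1 ↔ q.2 = q'.2) := by
    rintro q (⟨hq₁, hq₂⟩ | ⟨⟨hq₁, -⟩, hq₂⟩) q' (⟨hq₁', hq₂'⟩ | ⟨⟨hq₁', -⟩, hq₂'⟩)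
    · exact iff_of_true (hYF hq₁ hq₁') (hYG hq₂ hq₂')
    · exact iff_of_false (hYZ.ne_of_mem hq₁.1 hq₁'.1) (hYZ.ne_of_mem hq₂.1 hq₂'.1)
    · exact iff_of_false (hYZ.ne_of_mem hq₁'.1 hq₁.1).symm (hYZ.ne_of_mem hq₂'.1 hq₂.1).symm
    · exact iff_of_true (hZF hq₁ hq₁') (hZG hq₂ hq₂')
  have hPfin : P.Finite :=
    ((hY.inter_of_left F).prod (hY.inter_of_left G)).union
      (((hZ.inter_of_left F).subset (Set.sep_subset _ _)).prod (hZ.inter_of_left G))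
  have hPFG : P ⊆ F ×ˢ G := Set.union_subset
    (Set.prod_mono Set.inter_subset_right Set.inter_subset_right)
    (Set.prod_mono ((Set.sep_subset _ _).trans Set.inter_subset_right) Set.inter_subset_right)
  obtain ⟨φ, hφ, hφP, hφK⟩ := hF.exists_bijOn_of_pairs hFi hG hGi hPfin hPFG
    (fun q hq q' hq' h => Prod.ext h ((hPP q hq q' hq').1 h))
    (fun q hq q' hq' h => Prod.ext ((hPP q hq q' hq').2 h) h)
    ((hY.union hZ).inter_of_left F) Set.inter_subset_right (hY.union hZ)
  refine ⟨φ, hφ, fun x hx y hy => hφP (x, y) (Or.inl ⟨hx, hy⟩),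
    fun hp x hx z hz => hφP (x, z) (Or.inr ⟨⟨hx, hp⟩, hz⟩), fun hp x hx => ?_, fun hp x hx => ?_⟩
  · refine hφK ⟨⟨Or.inr hx.1, hx.2⟩, ?_⟩
    rintro ⟨q, hq, rfl⟩
    exact hYZ.ne_of_mem (hPY hp q hq).1 hx.1 rfl
  · by_cases hxP : x ∈ Prod.fst '' P
    · obtain ⟨q, hq, rfl⟩ := hxP
      rw [hφP q hq]
      exact hYZ.notMem_of_mem_left (hPY hp q hq).2
    · exact fun hxZ => hφK ⟨hx, hxP⟩ (Or.inr hxZ)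

theorem IsTreeAuto.symm {T : OmegaOneTree α} {β : Ordinal} {g g' : α → α}
    (h : IsTreeAuto T β g g') : IsTreeAuto T β g' g :=
  ⟨h.2.1, h.1, h.2.2.2.1, h.2.2.1, h.2.2.2.2.2, h.2.2.2.2.1⟩

namespace OmegaOneTree

variable (T : OmegaOneTree α) (γ : Ordinal)

def fiber (u : α) : Set α := {y | T.height y = γ + 1 ∧ T.restrict y γ = u}

def succExtend (f : α → α) (φ : α → α → α) (x : α) : α :=
  if T.height x ≤ γ then f x else φ (T.restrict x γ) x

variable {T γ} {x y u : α}

theorem fiber_countable (u : α) : (T.fiber γ u).Countable :=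
  (T.level_countable (γ + 1)).mono fun _ hy => hy.1

theorem fiber_infinite (hu : T.height u = γ) : (T.fiber γ u).Infinite :=
  (T.splitting u).mono fun _ hy => ⟨by rw [hy.2, hu], T.restrict_eq hy.1.le hu⟩

theorem mem_fiber_restrict (hx : T.height x = γ + 1) : x ∈ T.fiber γ (T.restrict x γ) :=
  ⟨hx, rfl⟩

theorem height_restrict_of_eq_add_one (hx : T.height x = γ + 1) :
    T.height (T.restrict x γ) = γ :=
  T.height_restrict x (hx ▸ (lt_add_one γ).le)

theorem lt_of_mem_fiber (hy : y ∈ T.fiber γ u) : u < y := by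
  obtain ⟨hy, rfl⟩ := hy
  refine (T.restrict_le y (hy ▸ (lt_add_one γ).le)).lt_of_ne fun h => (lt_add_one γ).ne ?_
  rw [← hy, ← h, height_restrict_of_eq_add_one hy]

theorem subsingleton_inter_fiber {X : Set α} (hX : Set.InjOn (T.restrict · γ) X) (u : α) :
    (X ∩ T.fiber γ u).Subsingleton :=
  fun _ hx _ hy => hX hx.1 hy.1 (hx.2.2.trans hy.2.2.symm)

theorem le_restrict_of_lt {β : Ordinal} (hxy : x < y) (hx : T.height x ≤ β)
    (hβ : β ≤ T.height y) : x ≤ T.restrict y β := by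
  rcases (T.restrict_le y hβ).lt_or_eq with hy | hy
  · rcases T.pred_linear hxy hy with h | h
    · exact h
    rcases h.lt_or_eq with h | h
    · have := T.height_strictMono h
      rw [T.height_restrict y hβ] at this
      exact absurd hx this.not_ge
    · exact h.ge
  · rw [hy]
    exact hxy.le

theorem exists_fiber_matching {f : α → α} (hf : ∀ u, T.height u = γ → T.height (f u) = γ)
    {Y Z : Set α} (hY : Y.Finite) (hZ : Z.Finite) (hYZ : Disjoint Y Z)
    (hYdrop : Set.InjOn (T.restrict · γ) Y) (hZdrop : Set.InjOn (T.restrict · γ) Z) (p : Prop) :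
    ∃ φ : α → α → α, ∀ u, T.height u = γ →
      Set.BijOn (φ u) (T.fiber γ u) (T.fiber γ (f u)) ∧
      (∀ x ∈ Y ∩ T.fiber γ u, ∀ y ∈ Y ∩ T.fiber γ (f u), φ u x = y) ∧
      (p → ∀ x ∈ Z ∩ T.fiber γ u, ∀ z ∈ Z ∩ T.fiber γ (f u), φ u x = z) ∧
      (¬p → Set.MapsTo (φ u) (Z ∩ T.fiber γ u) (Y ∪ Z)ᶜ) ∧
      (¬p → Set.MapsTo (φ u) ((Y ∪ Z) ∩ T.fiber γ u) Zᶜ) := by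
  choose! φ hφ using fun u (hu : T.height u = γ) =>
    (fiber_countable u).exists_bijOn_matching (fiber_infinite hu) (fiber_countable (f u))
      (fiber_infinite (hf u hu)) hY hZ hYZ (subsingleton_inter_fiber hYdrop u)
      (subsingleton_inter_fiber hYdrop (f u)) (subsingleton_inter_fiber hZdrop u)
      (subsingleton_inter_fiber hZdrop (f u)) p
  exact ⟨φ, hφ⟩

variable {f f' : α → α} {φ ψ : α → α → α}

theorem succExtend_of_le (hx : T.height x ≤ γ) : T.succExtend γ f φ x = f x :=
  if_pos hx

theorem succExtend_of_eq_add_one (hx : T.height x = γ + 1) :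
    T.succExtend γ f φ x = φ (T.restrict x γ) x :=
  if_neg (hx ▸ (lt_add_one γ).not_ge)

theorem succExtend_mem_fiber
    (hφ : ∀ u, T.height u = γ → Set.MapsTo (φ u) (T.fiber γ u) (T.fiber γ (f u)))
    (hx : T.height x = γ + 1) : T.succExtend γ f φ x ∈ T.fiber γ (f (T.restrict x γ)) := by
  rw [succExtend_of_eq_add_one hx]
  exact hφ _ (height_restrict_of_eq_add_one hx) (mem_fiber_restrict hx)

theorem height_succExtend (hf : ∀ x, T.height x ≤ γ → T.height (f x) = T.height x)
    (hφ : ∀ u, T.height u = γ → Set.MapsTo (φ u) (T.fiber γ u) (T.fiber γ (f u)))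
    (x : α) (hx : T.height x ≤ γ + 1) : T.height (T.succExtend γ f φ x) = T.height x := by
  rcases hx.lt_or_eq with hx | hx
  · have hx := Order.lt_add_one_iff.1 hx
    rw [succExtend_of_le hx]
    exact hf x hx
  · rw [hx]
    exact (succExtend_mem_fiber hφ hx).1

theorem succExtend_lt_succExtend (hf : ∀ x y, T.height y ≤ γ → x < y → f x < f y)
    (hφ : ∀ u, T.height u = γ → Set.MapsTo (φ u) (T.fiber γ u) (T.fiber γ (f u)))
    (x y : α) (hy : T.height y ≤ γ + 1) (hxy : x < y) :
    T.succExtend γ f φ x < T.succExtend γ f φ y := by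
  rcases hy.lt_or_eq with hy | hy
  · have hy := Order.lt_add_one_iff.1 hy
    rw [succExtend_of_le ((T.height_strictMono hxy).le.trans hy), succExtend_of_le hy]
    exact hf x y hy hxy
  have hx : T.height x ≤ γ := Order.lt_add_one_iff.1 (hy ▸ T.height_strictMono hxy)
  rw [succExtend_of_le hx]
  refine lt_of_le_of_lt ?_ (lt_of_mem_fiber (succExtend_mem_fiber hφ hy))
  rcases (T.le_restrict_of_lt hxy hx (hy ▸ (lt_add_one γ).le)).lt_or_eq with h | h
  · exact (hf _ _ (height_restrict_of_eq_add_one hy).le h).le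
  · rw [h]

theorem succExtend_succExtend (hf : IsTreeAuto T γ f f')
    (hφ : ∀ u, T.height u = γ → Set.MapsTo (φ u) (T.fiber γ u) (T.fiber γ (f u)))
    (hφψ : ∀ u, T.height u = γ → Set.LeftInvOn (ψ (f u)) (φ u) (T.fiber γ u))
    (x : α) (hx : T.height x ≤ γ + 1) :
    T.succExtend γ f' ψ (T.succExtend γ f φ x) = x := by
  rcases hx.lt_or_eq with hx | hx
  · have hx := Order.lt_add_one_iff.1 hx
    rw [succExtend_of_le hx, succExtend_of_le ((hf.1 x hx).trans_le hx)]
    exact hf.2.2.1 x hx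
  have hgx := succExtend_mem_fiber hφ hx
  rw [succExtend_of_eq_add_one hgx.1, hgx.2, succExtend_of_eq_add_one hx]
  exact hφψ _ (height_restrict_of_eq_add_one hx) (mem_fiber_restrict hx)

theorem isTreeAuto_succExtend (hf : IsTreeAuto T γ f f')
    (hφ : ∀ u, T.height u = γ → Set.MapsTo (φ u) (T.fiber γ u) (T.fiber γ (f u)))
    (hψ : ∀ v, T.height v = γ → Set.MapsTo (ψ v) (T.fiber γ v) (T.fiber γ (f' v)))
    (hφψ : ∀ u, T.height u = γ → Set.LeftInvOn (ψ (f u)) (φ u) (T.fiber γ u))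
    (hψφ : ∀ v, T.height v = γ → Set.LeftInvOn (φ (f' v)) (ψ v) (T.fiber γ v)) :
    IsTreeAuto T (γ + 1) (T.succExtend γ f φ) (T.succExtend γ f' ψ) :=
  ⟨height_succExtend hf.1 hφ, height_succExtend hf.2.1 hψ, succExtend_succExtend hf hφ hφψ,
    succExtend_succExtend hf.symm hψ hψφ, succExtend_lt_succExtend hf.2.2.2.2.1 hφ,
    succExtend_lt_succExtend hf.2.2.2.2.2 hψ⟩

theorem exists_isTreeAuto_succExtend (hf : IsTreeAuto T γ f f')
    (hφ : ∀ u, T.height u = γ → Set.BijOn (φ u) (T.fiber γ u) (T.fiber γ (f u))) :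
    ∃ g' : α → α, IsTreeAuto T (γ + 1) (T.succExtend γ f φ) g' ∧
      ∀ x, T.height x ≤ γ → g' x = f' x := by
  obtain ⟨r, -⟩ := T.root_exists
  have : Nonempty α := ⟨r⟩
  have hφ' : ∀ v, T.height v = γ → Set.BijOn (φ (f' v)) (T.fiber γ (f' v)) (T.fiber γ v) := by
    intro v hv
    simpa only [hf.2.2.2.1 v hv.le] using hφ (f' v) ((hf.2.1 v hv.le).trans hv)
  refine ⟨T.succExtend γ f' fun v => Function.invFunOn (φ (f' v)) (T.fiber γ (f' v)),
    isTreeAuto_succExtend hf (fun u hu => (hφ u hu).mapsTo)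
      (fun v hv => (hφ' v hv).surjOn.mapsTo_invFunOn) (fun u hu => ?_)
      (fun v hv => (hφ' v hv).surjOn.rightInvOn_invFunOn), fun x hx => succExtend_of_le hx⟩
  simpa only [hf.2.2.1 u hu.le] using (hφ u hu).injOn.leftInvOn_invFunOn

theorem autoConsistentSet_succExtend {X : Set α}
    (hφ : ∀ u, T.height u = γ → Set.MapsTo (φ u) (T.fiber γ u) (T.fiber γ (f u)))
    (hX : ∀ x ∈ X, T.height x = γ + 1)
    (hmatch : ∀ u, T.height u = γ → ∀ x ∈ X ∩ T.fiber γ u, ∀ y ∈ X ∩ T.fiber γ (f u), φ u x = y) :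
    AutoConsistentSet T (T.succExtend γ f φ) γ X := by
  intro x hx y hy
  have hu := height_restrict_of_eq_add_one (hX x hx)
  rw [succExtend_of_le hu.le]
  constructor
  · intro h
    rw [succExtend_of_eq_add_one (hX x hx)]
    exact hmatch _ hu x ⟨hx, mem_fiber_restrict (hX x hx)⟩ y ⟨hy, hX y hy, h.symm⟩
  · rintro rfl
    exact (succExtend_mem_fiber hφ (hX x hx)).2.symm

theorem mapsTo_compl_succExtend {g' : α → α} (hg : IsTreeAuto T (γ + 1) (T.succExtend γ f φ) g')
    {X K : Set α} (hX : ∀ x ∈ X, T.height x = γ + 1)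
    (hXK : ∀ u, T.height u = γ → Set.MapsTo (φ u) (X ∩ T.fiber γ u) Kᶜ)
    (hKX : ∀ u, T.height u = γ → Set.MapsTo (φ u) (K ∩ T.fiber γ u) Xᶜ) :
    Set.MapsTo (T.succExtend γ f φ) X Kᶜ ∧ Set.MapsTo g' X Kᶜ := by
  refine ⟨fun x hx => ?_, fun x hx hxK => ?_⟩
  · rw [succExtend_of_eq_add_one (hX x hx)]
    exact hXK _ (height_restrict_of_eq_add_one (hX x hx)) ⟨hx, mem_fiber_restrict (hX x hx)⟩
  have hy : T.height (g' x) = γ + 1 := (hg.2.1 x (hX x hx).le).trans (hX x hx)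
  have hgy : T.succExtend γ f φ (g' x) = x := hg.2.2.2.1 x (hX x hx).le
  rw [succExtend_of_eq_add_one hy] at hgy
  exact hKX _ (height_restrict_of_eq_add_one hy) ⟨hxK, mem_fiber_restrict hy⟩
    (by rw [hgy]; exact hx)

end OmegaOneTree

theorem auto_family_extension_avoiding_general
    (T : OmegaOneTree α) (γ : Ordinal)
    {ι : Type} (f f' : ι → α → α)
    (hf : ∀ τ, IsTreeAuto T γ (f τ) (f' τ))
    (A B : Set ι)
    (Y Z : Set α) (hYfin : Y.Finite) (hZfin : Z.Finite)
    (hYlev : ∀ x ∈ Y, T.height x = γ + 1) (hZlev : ∀ x ∈ Z, T.height x = γ + 1)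
    (hYdrop : Set.InjOn (fun x => T.restrict x γ) Y)
    (hZdrop : Set.InjOn (fun x => T.restrict x γ) Z)
    (hYZ : Y ∩ Z = ∅) :
    ∃ g g' : ι → α → α,
      (∀ τ, IsTreeAuto T (γ + 1) (g τ) (g' τ)) ∧
      (∀ τ, AutoExtends T γ (f τ) (f' τ) (g τ) (g' τ)) ∧
      (∀ τ ∈ B, AutoConsistentSet T (g τ) γ Y) ∧
      (∀ τ ∈ A, AutoConsistentSet T (g τ) γ Z) ∧
      (∀ τ ∈ B, τ ∉ A → ∀ x ∈ Z, g τ x ∉ Y ∪ Z ∧ g' τ x ∉ Y ∪ Z) := by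
  choose φ hφ using fun τ => T.exists_fiber_matching
    (fun u hu => ((hf τ).1 u hu.le).trans hu) hYfin hZfin
    (Set.disjoint_iff_inter_eq_empty.2 hYZ) hYdrop hZdrop (τ ∈ A)
  have hmaps τ u (hu : T.height u = γ) := (hφ τ u hu).1.mapsTo
  choose g' hg' using fun τ =>
    OmegaOneTree.exists_isTreeAuto_succExtend (hf τ) fun u hu => (hφ τ u hu).1
  refine ⟨fun τ => T.succExtend γ (f τ) (φ τ), g', fun τ => (hg' τ).1,
    fun τ => ⟨fun x hx => OmegaOneTree.succExtend_of_le hx, (hg' τ).2⟩,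
    fun τ _ => OmegaOneTree.autoConsistentSet_succExtend (hmaps τ) hYlev
      fun u hu => (hφ τ u hu).2.1,
    fun τ hτ => OmegaOneTree.autoConsistentSet_succExtend (hmaps τ) hZlev
      fun u hu => (hφ τ u hu).2.2.1 hτ,
    fun τ _ hτ x hx => ?_⟩
  have havoid := OmegaOneTree.mapsTo_compl_succExtend (hg' τ).1 hZlev
    (fun u hu => (hφ τ u hu).2.2.2.1 hτ) fun u hu => (hφ τ u hu).2.2.2.2 hτ
  exact ⟨havoid.1 hx, havoid.2 hx⟩

/-- Lemma 5.39: one-step extension of a countable family of automorphisms which is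
consistent on `Y` for indices in `B`, consistent on `Z` for indices in `A`, and
moves elements of `Z` out of `Y ∪ Z` for indices in `B \ A`. -/
theorem auto_family_extension_avoiding
    (T : OmegaOneTree α) (γ : Ordinal) (hγ : γ < omega1)
    {ι : Type} [Countable ι] (f f' : ι → α → α)
    (hf : ∀ τ, IsTreeAuto T γ (f τ) (f' τ))
    (A B : Set ι) (hAB : A ⊆ B) (hAfin : A.Finite) (hBfin : B.Finite)
    (Y Z : Set α) (hYfin : Y.Finite) (hZfin : Z.Finite)
    (hYlev : ∀ x ∈ Y, T.height x = γ + 1) (hZlev : ∀ x ∈ Z, T.height x = γ + 1)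
    (hYdrop : Set.InjOn (fun x => T.restrict x γ) Y)
    (hZdrop : Set.InjOn (fun x => T.restrict x γ) Z)
    (hYZ : Y ∩ Z = ∅) :
    ∃ g g' : ι → α → α,
      (∀ τ, IsTreeAuto T (γ + 1) (g τ) (g' τ)) ∧
      (∀ τ, AutoExtends T γ (f τ) (f' τ) (g τ) (g' τ)) ∧
      (∀ τ ∈ B, AutoConsistentSet T (g τ) γ Y) ∧
      (∀ τ ∈ A, AutoConsistentSet T (g τ) γ Z) ∧
      (∀ τ ∈ B, τ ∉ A → ∀ x ∈ Z, g τ x ∉ Y ∪ Z ∧ g' τ x ∉ Y ∪ Z) :=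
  auto_family_extension_avoiding_general T γ f f' hf A B Y Z hYfin hZfin hYlev hZlev hYdrop hZdrop
    hYZ
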